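/- Let μ be a Borel probability measure with compact support on ℝⁿ and Λ ⊂ ℝⁿ countable. Define Q(ξ) = ∑_{λ∈Λ} |μ̂(ξ+λ)|². Then: (1) the exponentials {e^{2πi⟨λ,x⟩}}_{λ∈Λ} are orthonormal in L²(μ) if and only if Q(ξ) ≤ 1 for all ξ ∈ ℝⁿ; (2) they form an orthonormal basis of L²(μ) if and only if Q(ξ) = 1 for all ξ ∈ ℝⁿ. -/

import Mathlib

open MeasureTheory Complex ENNReal RealInnerProductSpace

/-- Fourier transform of a measure on `ℝⁿ`: `μ̂(ξ) = ∫ e^{2πi⟨x,ξ⟩} dμ(x)`. -/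
noncomputable def FTe (n : ℕ) (μ : Measure (EuclideanSpace ℝ (Fin n)))
    (ξ : EuclideanSpace ℝ (Fin n)) : ℂ :=
  ∫ x, Complex.exp (2 * (Real.pi : ℂ) * Complex.I * ((⟪x, ξ⟫ : ℝ) : ℂ)) ∂μ

namespace JP
open BoundedContinuousFunction
variable {n : ℕ}

noncomputable def expb (η : EuclideanSpace ℝ (Fin n)) :
    EuclideanSpace ℝ (Fin n) →ᵇ ℂ :=
  BoundedContinuousFunction.ofNormedAddCommGroup
    (fun x => Complex.exp (2 * (Real.pi : ℂ) * Complex.I * ((⟪η, x⟫ : ℝ) : ℂ)))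
    (by
      exact Complex.continuous_exp.comp <| (continuous_const.mul <|
        Complex.continuous_ofReal.comp (continuous_const.inner continuous_id'))) 1
    (by
      intro x
      rw [Complex.norm_exp]
      simp)

@[simp] lemma expb_apply (η x : EuclideanSpace ℝ (Fin n)) :
    expb η x = Complex.exp (2 * (Real.pi : ℂ) * Complex.I * ((⟪η, x⟫ : ℝ) : ℂ)) := rfl

lemma expb_mul (a b : EuclideanSpace ℝ (Fin n)) : expb a * expb b = expb (a + b) := by
  ext x
  simp only [BoundedContinuousFunction.coe_mul, Pi.mul_apply, expb_apply, ← Complex.exp_add,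
    inner_add_left]
  push_cast
  ring_nf

lemma expb_star (a : EuclideanSpace ℝ (Fin n)) : star (expb a) = expb (-a) := by
  ext x
  simp only [BoundedContinuousFunction.coe_star, Pi.star_apply, expb_apply, inner_neg_left]
  show (starRingEnd ℂ) _ = _
  rw [← Complex.exp_conj]
  congr 1
  simp [Complex.ext_iff]

lemma expb_zero : expb (0 : EuclideanSpace ℝ (Fin n)) = 1 := by
  ext x
  simp

lemma expb_ne (x y : EuclideanSpace ℝ (Fin n)) (hxy : x ≠ y) :
    ∃ η, expb η x ≠ expb η y := by
  set d := x - y with hd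
  have hd0 : d ≠ 0 := sub_ne_zero.mpr hxy
  refine ⟨(2 * ‖d‖ ^ 2)⁻¹ • d, fun h => ?_⟩
  simp only [expb_apply] at h
  rw [Complex.exp_eq_exp_iff_exists_int] at h
  obtain ⟨m, hm⟩ := h
  have hip : (⟪(2 * ‖d‖ ^ 2)⁻¹ • d, x⟫ : ℝ) - ⟪(2 * ‖d‖ ^ 2)⁻¹ • d, y⟫ = 2⁻¹ := by
    rw [← inner_sub_right, ← hd, real_inner_smul_left, real_inner_self_eq_norm_sq]
    have : ‖d‖ ^ 2 ≠ 0 := pow_ne_zero 2 (norm_ne_zero_iff.mpr hd0)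
    field_simp
  have hπ : (2 * (Real.pi : ℂ) * Complex.I) ≠ 0 := by
    simp [Real.pi_ne_zero, Complex.I_ne_zero]
  have hm' : 2 * (Real.pi : ℂ) * Complex.I * ((⟪(2 * ‖d‖ ^ 2)⁻¹ • d, x⟫ : ℝ) : ℂ) =
      2 * (Real.pi : ℂ) * Complex.I * (((⟪(2 * ‖d‖ ^ 2)⁻¹ • d, y⟫ : ℝ) : ℂ) + m) := by
    rw [hm]; ring
  have hAB := mul_left_cancel₀ hπ hm'
  have hre := congrArg Complex.re hAB
  simp only [Complex.ofReal_re, Complex.add_re, Complex.intCast_re] at hre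
  have h12 : (2 : ℝ) * m = 1 := by
    rw [hre] at hip
    field_simp at hip
    linarith
  have : (2 * m : ℤ) = 1 := by exact_mod_cast h12
  omega

variable (μ : Measure (EuclideanSpace ℝ (Fin n))) [IsProbabilityMeasure μ]

noncomputable def expLp (η : EuclideanSpace ℝ (Fin n)) : Lp ℂ 2 μ :=
  BoundedContinuousFunction.toLp 2 μ ℂ (expb η)

lemma coeFn_expLp (η : EuclideanSpace ℝ (Fin n)) : ⇑(expLp μ η) =ᵐ[μ] ⇑(expb η) :=
  BoundedContinuousFunction.coeFn_toLp 2 μ ℂ (expb η)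

lemma inner_expLp (a b : EuclideanSpace ℝ (Fin n)) :
    (inner ℂ (expLp μ a) (expLp μ b) : ℂ) = FTe n μ (b - a) := by
  rw [MeasureTheory.L2.inner_def, FTe]
  refine integral_congr_ae ?_
  filter_upwards [coeFn_expLp μ a, coeFn_expLp μ b] with x hxa hxb
  rw [hxa, hxb]
  show expb b x * (starRingEnd ℂ) (expb a x) = _
  have h1 : (⟪x, b - a⟫ : ℝ) = (⟪b, x⟫ : ℝ) - (⟪a, x⟫ : ℝ) := by
    rw [real_inner_comm]; exact inner_sub_left _ _ _
  simp only [expb_apply, ← Complex.exp_conj, map_mul, Complex.conj_I, Complex.conj_ofReal,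
    map_ofNat, ← Complex.exp_add, h1]
  push_cast
  ring_nf

@[simp] lemma FTe_zero : FTe n μ 0 = 1 := by
  simp [FTe]

lemma norm_expLp (η : EuclideanSpace ℝ (Fin n)) : ‖expLp μ η‖ = 1 := by
  have h : (inner ℂ (expLp μ η) (expLp μ η) : ℂ) = 1 := by
    rw [inner_expLp, sub_self, FTe_zero]
  rw [@inner_self_eq_norm_sq_to_K ℂ] at h
  have h2 : ‖expLp μ η‖ ^ 2 = 1 := by
    have := congrArg Complex.re h
    simpa [← Complex.ofReal_pow] using this
  nlinarith [norm_nonneg (expLp μ η)]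

lemma dense_span_expLp (hcpt : ∃ K : Set (EuclideanSpace ℝ (Fin n)), IsCompact K ∧ μ Kᶜ = 0) :
    (Submodule.span ℂ (Set.range (expLp μ))).topologicalClosure = ⊤ := by
  classical
  obtain ⟨K, hK, hKc⟩ := hcpt
  haveI : CompactSpace K := isCompact_iff_compactSpace.mp hK
  -- restriction to K as a linear map
  let R : (EuclideanSpace ℝ (Fin n) →ᵇ ℂ) →ₗ[ℂ] C(K, ℂ) :=
    { toFun := fun f => f.toContinuousMap.restrict K
      map_add' := fun f g => rfl
      map_smul' := fun c f => rfl }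
  set s : Set C(K, ℂ) := Set.range (fun η => R (expb η)) with hs
  set M : Submodule ℂ C(K, ℂ) := Submodule.span ℂ s with hM
  have h1s : (1 : C(K, ℂ)) ∈ s := ⟨0, by show R (expb 0) = 1; rw [expb_zero]; rfl⟩
  have hmuls : ∀ p ∈ s, ∀ q ∈ s, p * q ∈ s := by
    rintro - ⟨a, rfl⟩ - ⟨b, rfl⟩
    refine ⟨a + b, ?_⟩
    show R (expb (a + b)) = R (expb a) * R (expb b)
    rw [← expb_mul]
    rfl
  have h1 : (1 : C(K, ℂ)) ∈ M := Submodule.subset_span h1s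
  have hmul : ∀ x y, x ∈ M → y ∈ M → x * y ∈ M := by
    intro x y hx hy
    have hle : M * M ≤ M := by
      rw [hM, Submodule.span_mul_span]
      refine Submodule.span_le.mpr ?_
      rintro - ⟨a, ha, b, hb, rfl⟩
      exact Submodule.subset_span (hmuls a ha b hb)
    exact hle (Submodule.mul_mem_mul hx hy)
  have hstar : ∀ x ∈ M, star x ∈ M := by
    intro x hx
    induction hx using Submodule.span_induction with
    | mem z hz =>
      obtain ⟨a, rfl⟩ := hz
      have : star (R (expb a)) = R (expb (-a)) := by
        rw [← expb_star]; rfl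
      rw [this]
      exact Submodule.subset_span ⟨-a, rfl⟩
    | zero => simpa using Submodule.zero_mem M
    | add u v hu hv hu' hv' => rw [star_add]; exact Submodule.add_mem M hu' hv'
    | smul c u hu hu' =>
      rw [star_smul]
      exact Submodule.smul_mem M _ hu'
  let A : StarSubalgebra ℂ C(K, ℂ) :=
    { M.toSubalgebra h1 hmul with star_mem' := fun hx => hstar _ hx }
  have hsep : A.SeparatesPoints := by
    intro z w hzw
    obtain ⟨η, hη⟩ := expb_ne (z : EuclideanSpace ℝ (Fin n)) w
      (fun h => hzw (Subtype.ext h))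
    exact ⟨⇑(R (expb η)), ⟨R (expb η), Submodule.subset_span ⟨η, rfl⟩, rfl⟩, hη⟩
  have hSW := ContinuousMap.starSubalgebra_topologicalClosure_eq_top_of_separatesPoints A hsep
  have hae : ∀ᵐ x ∂μ, x ∈ K := by
    rw [MeasureTheory.ae_iff]
    exact hKc
  set D := (Submodule.span ℂ (Set.range (expLp μ))).topologicalClosure with hD
  have hDc : IsClosed (D : Set (Lp ℂ 2 μ)) := Submodule.isClosed_topologicalClosure _
  have key : ∀ g : EuclideanSpace ℝ (Fin n) →ᵇ ℂ,
      BoundedContinuousFunction.toLp 2 μ ℂ g ∈ D := by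
    intro g
    have hmemc : (BoundedContinuousFunction.toLp (E := ℂ) 2 μ ℂ g : Lp ℂ 2 μ) ∈
        closure ((Submodule.span ℂ (Set.range (expLp μ)) : Set (Lp ℂ 2 μ))) := by
      rw [Metric.mem_closure_iff]
      intro ε hε
      have hgK : (g.toContinuousMap.restrict K) ∈ closure (A : Set C(K, ℂ)) := by
        rw [← StarSubalgebra.topologicalClosure_coe, hSW]
        exact StarSubalgebra.mem_top
      obtain ⟨q, hqA, hq⟩ := Metric.mem_closure_iff.mp hgK (ε / 2) (half_pos hε)
      have hq' : q ∈ Submodule.map R (Submodule.span ℂ (Set.range expb)) := by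
        rw [Submodule.map_span, ← Set.range_comp]
        exact hqA
      obtain ⟨p, hp, hpq⟩ := hq'
      refine ⟨BoundedContinuousFunction.toLp 2 μ ℂ p, ?_, ?_⟩
      · have himg : BoundedContinuousFunction.toLp (E := ℂ) 2 μ ℂ p ∈
            Submodule.map ((BoundedContinuousFunction.toLp (E := ℂ) 2 μ ℂ : _ →L[ℂ] Lp ℂ 2 μ) : _ →ₗ[ℂ] Lp ℂ 2 μ)
              (Submodule.span ℂ (Set.range expb)) := ⟨p, hp, rfl⟩
        rw [Submodule.map_span, ← Set.range_comp] at himg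
        exact himg
      · rw [dist_eq_norm, ← map_sub]
        have hb : ∀ᵐ x ∂μ, ‖(g - p) x‖ ≤ ε / 2 := by
          filter_upwards [hae] with x hx
          have hval : (g - p) x = (g.toContinuousMap.restrict K) ⟨x, hx⟩ - q ⟨x, hx⟩ := by
            rw [← hpq]
            rfl
          rw [hval, ← dist_eq_norm]
          exact le_of_lt (lt_of_le_of_lt (ContinuousMap.dist_apply_le_dist _) hq)
        have hsn : eLpNorm (⇑(g - p)) 2 μ ≤ ENNReal.ofReal (ε / 2) := by
          have := eLpNorm_le_of_ae_bound (p := 2) (μ := μ) hb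
          simpa using this
        have hnorm : ‖BoundedContinuousFunction.toLp (E := ℂ) 2 μ ℂ (g - p)‖
            = (eLpNorm (⇑(g - p)) 2 μ).toReal := by
          rw [Lp.norm_def, eLpNorm_congr_ae (BoundedContinuousFunction.coeFn_toLp 2 μ ℂ (g - p))]
        rw [hnorm]
        have := ENNReal.toReal_le_of_le_ofReal (by positivity) hsn
        linarith
    rw [hD, ← SetLike.mem_coe, Submodule.topologicalClosure_coe]
    exact hmemc
  rw [eq_top_iff]
  intro f _
  have hdr := BoundedContinuousFunction.toLp_denseRange ℂ (E := ℂ) (μ := μ)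
    (p := (2 : ℝ≥0∞)) (by norm_num)
  have hf : f ∈ closure (Set.range (BoundedContinuousFunction.toLp (E := ℂ) 2 μ ℂ)) := hdr f
  have hsub : Set.range (BoundedContinuousFunction.toLp (E := ℂ) 2 μ ℂ) ⊆ (D : Set _) := by
    rintro - ⟨g, rfl⟩; exact key g
  have := closure_mono hsub hf
  rwa [hDc.closure_eq] at this


lemma enn_sq (z : ℂ) : ((‖z‖₊ : ℝ≥0∞)) ^ 2 = ENNReal.ofReal (‖z‖ ^ 2) := by
  rw [ENNReal.ofReal_pow (norm_nonneg z), ← coe_nnnorm, ENNReal.ofReal_coe_nnreal]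

lemma enn_sum {ι : Type*} (c : ι → ℂ) (s : Finset ι) :
    ∑ i ∈ s, ((‖c i‖₊ : ℝ≥0∞)) ^ 2 = ENNReal.ofReal (∑ i ∈ s, ‖c i‖ ^ 2) := by
  rw [ENNReal.ofReal_sum_of_nonneg (fun i _ => by positivity)]
  exact Finset.sum_congr rfl fun i _ => enn_sq _

lemma enn_tsum_le {ι : Type*} (c : ι → ℂ) {B : ℝ} (h : ∀ s : Finset ι, ∑ i ∈ s, ‖c i‖ ^ 2 ≤ B) :
    ∑' i, ((‖c i‖₊ : ℝ≥0∞)) ^ 2 ≤ ENNReal.ofReal B := by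
  rw [ENNReal.tsum_eq_iSup_sum]
  exact iSup_le fun s => (enn_sum c s).le.trans (ENNReal.ofReal_le_ofReal (h s))

lemma enn_tsum_eq {ι : Type*} (c : ι → ℂ) {B : ℝ} (h : HasSum (fun i => ‖c i‖ ^ 2) B) :
    ∑' i, ((‖c i‖₊ : ℝ≥0∞)) ^ 2 = ENNReal.ofReal B := by
  rw [← h.tsum_eq, ENNReal.ofReal_tsum_of_nonneg (fun i => by positivity) h.summable]
  exact tsum_congr fun i => enn_sq _

end JP

open JP in
/-- Jorgensen–Pedersen: for a compactly supported Borel probability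
measure `μ` on `ℝⁿ`, a countable `Λ`, and `E : Λ → L²(μ)` representing the
exponentials `e^{2πi⟨λ,x⟩}`, setting `Q(ξ) = ∑_{λ∈Λ} |μ̂(ξ+λ)|²`:
(1) the exponentials are orthonormal iff `Q ≤ 1`;
(2) they form an orthonormal basis (orthonormal with dense span) iff `Q ≡ 1`. -/
theorem stmt_12 (n : ℕ) (μ : Measure (EuclideanSpace ℝ (Fin n)))
    [IsProbabilityMeasure μ]
    (hcpt : ∃ K : Set (EuclideanSpace ℝ (Fin n)), IsCompact K ∧ μ Kᶜ = 0)
    (Λ : Set (EuclideanSpace ℝ (Fin n))) (hΛ : Λ.Countable)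
    (E : Λ → Lp ℂ 2 μ)
    (hE : ∀ l : Λ, ⇑(E l) =ᵐ[μ] fun x =>
      Complex.exp (2 * (Real.pi : ℂ) * Complex.I *
        ((⟪(l : EuclideanSpace ℝ (Fin n)), x⟫ : ℝ) : ℂ))) :
    (Orthonormal ℂ E ↔
      ∀ ξ, ∑' l : Λ, (‖FTe n μ (ξ + (l : EuclideanSpace ℝ (Fin n)))‖₊ : ℝ≥0∞) ^ 2 ≤ 1) ∧
    ((Orthonormal ℂ E ∧ (Submodule.span ℂ (Set.range E)).topologicalClosure = ⊤) ↔
      ∀ ξ, ∑' l : Λ, (‖FTe n μ (ξ + (l : EuclideanSpace ℝ (Fin n)))‖₊ : ℝ≥0∞) ^ 2 = 1) := by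
  classical
  have hEe : ∀ l : Λ, E l = expLp μ (l : EuclideanSpace ℝ (Fin n)) := fun l =>
    Lp.ext ((hE l).trans (coeFn_expLp μ (l : EuclideanSpace ℝ (Fin n))).symm)
  have hinner : ∀ (ξ : EuclideanSpace ℝ (Fin n)) (l : Λ),
      (inner ℂ (expLp μ (-ξ)) (E l) : ℂ) = FTe n μ (ξ + (l : EuclideanSpace ℝ (Fin n))) := by
    intro ξ l
    rw [hEe l, inner_expLp, sub_neg_eq_add, add_comm]
  -- Part 1
  have part1 : Orthonormal ℂ E ↔
      ∀ ξ, ∑' l : Λ, (‖FTe n μ (ξ + (l : EuclideanSpace ℝ (Fin n)))‖₊ : ℝ≥0∞) ^ 2 ≤ 1 := by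
    constructor
    · intro hO ξ
      have hbes : ∀ s : Finset Λ,
          ∑ l ∈ s, ‖FTe n μ (ξ + (l : EuclideanSpace ℝ (Fin n)))‖ ^ 2 ≤ 1 := by
        intro s
        have h := hO.sum_inner_products_le (expLp μ (-ξ)) (s := s)
        rw [norm_expLp, one_pow] at h
        refine le_trans (le_of_eq (Finset.sum_congr rfl fun l _ => ?_)) h
        rw [← hinner ξ l, norm_inner_symm]
      simpa using enn_tsum_le _ hbes
    · intro hQ
      rw [orthonormal_iff_ite]
      intro i j
      have hij : (inner ℂ (E i) (E j) : ℂ) =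
          FTe n μ (-(i : EuclideanSpace ℝ (Fin n)) + (j : EuclideanSpace ℝ (Fin n))) := by
        rw [hEe i, hEe j, inner_expLp, sub_eq_neg_add]
      by_cases h : i = j
      · subst h
        rw [if_pos rfl, hij, neg_add_cancel, FTe_zero]
      · rw [if_neg h, hij]
        have hs := hQ (-(i : EuclideanSpace ℝ (Fin n)))
        have hpair :
            (‖FTe n μ (-(i : EuclideanSpace ℝ (Fin n)) + (i : EuclideanSpace ℝ (Fin n)))‖₊ : ℝ≥0∞) ^ 2
            + (‖FTe n μ (-(i : EuclideanSpace ℝ (Fin n)) + (j : EuclideanSpace ℝ (Fin n)))‖₊ : ℝ≥0∞) ^ 2 ≤ 1 := by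
          have h2 := le_trans (ENNReal.sum_le_tsum ({i, j} : Finset ↑Λ)) hs
          rwa [Finset.sum_pair h] at h2
        rw [neg_add_cancel, FTe_zero] at hpair
        norm_num at hpair
        have h0 : (‖FTe n μ (-(i : EuclideanSpace ℝ (Fin n)) + (j : EuclideanSpace ℝ (Fin n)))‖₊ : ℝ≥0∞) ^ 2 = 0 := by
          by_contra hne
          exact absurd hpair (not_le.mpr (ENNReal.lt_add_right one_ne_top hne))
        have h0' := (pow_eq_zero_iff two_ne_zero).mp h0
        simpa using h0'
  refine ⟨part1, ?_, ?_⟩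
  -- Part 2, forward
  · rintro ⟨hO, hdense⟩ ξ
    let b : HilbertBasis Λ ℂ (Lp ℂ 2 μ) := HilbertBasis.mk hO (le_of_eq hdense.symm)
    have hb : ∀ l : Λ, b l = E l := fun l => by
      rw [HilbertBasis.coe_mk]
    set f := expLp μ (-ξ) with hf
    have hff : (inner ℂ f f : ℂ) = 1 := by
      rw [@inner_self_eq_norm_sq_to_K ℂ, norm_expLp]
      norm_num
    have hsumC := b.hasSum_inner_mul_inner f f
    rw [hff] at hsumC
    have h2 := hsumC.mapL Complex.reCLM
    have hterm : (fun l : Λ => Complex.reCLM ((inner ℂ f (b l) : ℂ) * (inner ℂ (b l) f : ℂ)))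
        = fun l : Λ => ‖FTe n μ (ξ + (l : EuclideanSpace ℝ (Fin n)))‖ ^ 2 := by
      funext l
      have hz : (inner ℂ f (b l) : ℂ) = FTe n μ (ξ + (l : EuclideanSpace ℝ (Fin n))) := by
        rw [hb l]; exact hinner ξ l
      have hz' : (inner ℂ (b l) f : ℂ) =
          (starRingEnd ℂ) (FTe n μ (ξ + (l : EuclideanSpace ℝ (Fin n)))) := by
        rw [← inner_conj_symm, hz]
      rw [hz, hz', Complex.mul_conj]
      simp [Complex.normSq_eq_norm_sq, ← Complex.ofReal_pow]
    rw [hterm] at h2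
    simp only [Complex.reCLM_apply, Complex.one_re] at h2
    rw [enn_tsum_eq _ h2]
    simp
  -- Part 2, backward
  · intro hQ
    have hO : Orthonormal ℂ E := part1.mpr fun ξ => le_of_eq (hQ ξ)
    refine ⟨hO, ?_⟩
    set S := (Submodule.span ℂ (Set.range E)).topologicalClosure with hS
    have hSclosed : IsClosed (S : Set (Lp ℂ 2 μ)) := Submodule.isClosed_topologicalClosure _
    haveI : CompleteSpace S := hSclosed.completeSpace_coe
    have claim : ∀ η : EuclideanSpace ℝ (Fin n), expLp μ η ∈ S := by
      intro η
      set f := expLp μ η with hfdef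
      have hfξ : f = expLp μ (-(-η)) := by rw [neg_neg]
      set Pf := (S.orthogonalProjectionOnto f : Lp ℂ 2 μ) with hPf
      have hPmem : Pf ∈ S := SetLike.coe_mem _
      have hvmem : f - Pf ∈ Sᗮ := Submodule.sub_starProjection_mem_orthogonal f
      have hEinS : ∀ l : Λ, E l ∈ S :=
        fun l => Submodule.le_topologicalClosure _ (Submodule.subset_span ⟨l, rfl⟩)
      have hproj : ∀ l : Λ, (inner ℂ (E l) Pf : ℂ) = inner ℂ (E l) f := by
        intro l
        have h0 : (inner ℂ (E l) (f - Pf) : ℂ) = 0 :=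
          Submodule.inner_right_of_mem_orthogonal (hEinS l) hvmem
        rw [inner_sub_right] at h0
        exact (sub_eq_zero.mp h0).symm
      have hbes : ∀ s : Finset Λ,
          ∑ l ∈ s, ‖FTe n μ (-η + (l : EuclideanSpace ℝ (Fin n)))‖ ^ 2 ≤ ‖Pf‖ ^ 2 := by
        intro s
        have h := hO.sum_inner_products_le Pf (s := s)
        refine le_trans (le_of_eq (Finset.sum_congr rfl fun l _ => ?_)) h
        rw [← hinner (-η) l, ← hfξ, norm_inner_symm, ← hproj l]
      have hle : (1 : ℝ≥0∞) ≤ ENNReal.ofReal (‖Pf‖ ^ 2) := by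
        rw [← hQ (-η)]
        exact enn_tsum_le _ hbes
      have hPf1 : 1 ≤ ‖Pf‖ ^ 2 := ENNReal.one_le_ofReal.mp hle
      have hnf : ‖f‖ = 1 := norm_expLp μ η
      have hip0 : (inner ℂ Pf (f - Pf) : ℂ) = 0 :=
        Submodule.inner_right_of_mem_orthogonal hPmem hvmem
      have hpyth : ‖f‖ ^ 2 = ‖Pf‖ ^ 2 + ‖f - Pf‖ ^ 2 := by
        have hsum : Pf + (f - Pf) = f := by abel
        have h := @norm_add_sq ℂ _ _ _ _ Pf (f - Pf)
        rw [hsum, hip0] at h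
        simpa using h
      have hz : ‖f - Pf‖ = 0 := by
        have h1 : ‖f - Pf‖ ^ 2 ≤ 0 := by rw [hnf] at hpyth; nlinarith
        nlinarith [norm_nonneg (f - Pf)]
      have : f = Pf := by
        have := norm_eq_zero.mp hz
        exact sub_eq_zero.mp this
      rw [this]
      exact hPmem
    rw [eq_top_iff, ← dense_span_expLp μ hcpt]
    refine Submodule.topologicalClosure_minimal _ ?_ hSclosed
    rw [Submodule.span_le]
    rintro - ⟨η, rfl⟩
    exact claim η
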